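/- For all α, β, γ ∈ ℕ and all p, q ∈ G, the sequence of double cosets j ↦ K[α]·(p · Θ_j[β] · q)·K[γ] is eventually constant: there exists N such that for all j, k ≥ N, the sets K[α]·(p · Θ_j[β] · q)·K[γ] and K[α]·(p · Θ_k[β] · q)·K[γ] coincide. -/

import Mathlib

open Equiv

abbrev P3 := Equiv.Perm ℕ × Equiv.Perm ℕ × Equiv.Perm ℕ

/-- The subgroup of finitely supported permutations of `ℕ`. -/
def Sinf : Subgroup (Equiv.Perm ℕ) where
  carrier := {g | {x | g x ≠ x}.Finite}
  one_mem' := by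
    show Set.Finite {x | (1 : Equiv.Perm ℕ) x ≠ x}
    convert Set.finite_empty
    ext x; simp
  mul_mem' {f g} hf hg := by
    apply Set.Finite.subset (hf.union hg)
    intro x hx
    simp only [Set.mem_setOf_eq, Set.mem_union, Equiv.Perm.mul_apply] at hx ⊢
    by_contra hc
    push_neg at hc
    rw [hc.2] at hx
    exact hx hc.1
  inv_mem' {g} hg := by
    apply Set.Finite.subset hg
    intro x hx
    simp only [Set.mem_setOf_eq] at hx ⊢
    intro h
    apply hx
    apply g.injective
    rw [← Equiv.Perm.mul_apply, mul_inv_cancel, Equiv.Perm.one_apply, h]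

/-- Permutations fixing every point `< α`. -/
def fixLt (α : ℕ) : Subgroup (Equiv.Perm ℕ) where
  carrier := {g | ∀ i < α, g i = i}
  one_mem' := fun _ _ => rfl
  mul_mem' {f g} hf hg := fun i hi => by
    simp only [Equiv.Perm.mul_apply, hg i hi, hf i hi]
  inv_mem' {g} hg := fun i hi => by
    apply g.injective
    rw [← Equiv.Perm.mul_apply, mul_inv_cancel, Equiv.Perm.one_apply, hg i hi]

/-- The diagonal embedding of `Perm ℕ` into the triple product. -/
def diag3 : Equiv.Perm ℕ →* P3 where
  toFun h := (h, h, h)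
  map_one' := rfl
  map_mul' _ _ := rfl

/-- `G = S_∞ × S_∞ × S_∞`. -/
def Ggrp : Subgroup P3 := Sinf.prod (Sinf.prod Sinf)

/-- `K[α]`: diagonal triples `(h,h,h)` with `h ∈ S_∞` fixing `0,…,α-1`. -/
def KK (α : ℕ) : Subgroup P3 := Subgroup.map diag3 (Sinf ⊓ fixLt α)

/-- The double coset `L·p·M`. -/
def dcosOf (L M : Subgroup P3) (p : P3) : Set P3 :=
  {y | ∃ a ∈ L, ∃ b ∈ M, y = a * p * b}

/-- underlying function of `θ_j[β]`. -/
def thetaFun (β j : ℕ) (x : ℕ) : ℕ :=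
  if β ≤ x ∧ x < β + j then x + j
  else if β + j ≤ x ∧ x < β + 2 * j then x - j
  else x

lemma thetaFun_invol (β j : ℕ) : ∀ x, thetaFun β j (thetaFun β j x) = x := by
  intro x
  simp only [thetaFun]
  split_ifs <;> omega

/-- `θ_j[β]`: swaps the blocks `[β, β+j)` and `[β+j, β+2j)`. -/
def theta (β j : ℕ) : Equiv.Perm ℕ :=
  ⟨thetaFun β j, thetaFun β j, thetaFun_invol β j, thetaFun_invol β j⟩

lemma theta_mem_Sinf (β j : ℕ) : theta β j ∈ Sinf := by
  apply Set.Finite.subset (Set.finite_Iio (β + 2 * j))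
  intro x hx
  simp only [Set.mem_setOf_eq, theta, Equiv.coe_fn_mk, Set.mem_Iio] at hx ⊢
  by_contra hc
  push_neg at hc
  apply hx
  simp only [thetaFun]
  split_ifs <;> omega

/-- `Θ_j[β] = (θ_j[β], θ_j[β], θ_j[β])`. -/
def ThetaP (β j : ℕ) : P3 := diag3 (theta β j)

lemma KK_le_G {α : ℕ} : KK α ≤ Ggrp := by
  rintro g ⟨h, hh, rfl⟩
  exact ⟨hh.1, hh.1, hh.1⟩

lemma Theta_mem_G (β j : ℕ) : ThetaP β j ∈ Ggrp :=
  ⟨theta_mem_Sinf β j, theta_mem_Sinf β j, theta_mem_Sinf β j⟩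

/- Let `M = β + t` with `t` so large that `M ≥ α, γ` and every coordinate of `p` and `q` fixes all
points `≥ M`. Permutations fixing `[0, M)` pointwise then commute with those coordinates and lie in
`K[α]` and `K[γ]`, so it suffices to find two of them, `c` and `d`, with `c θ_j[β] d = θ_t[β]`
for all large `j`. For `j ≥ 2t` one can take `c = θ_{j-t}[M]`: `θ_t[β]` sends `[β, M)` to
`[M, M + t)`, which `c` sends on to `[β + j, β + j + t)`, which `θ_j[β]` sends back to `[β, M)`.
So `d = θ_j[β] c θ_t[β]` fixes `[0, M)` pointwise, and `c θ_j[β] d = θ_t[β]` because the `θ` are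
involutions. -/

lemma theta_mul_self (β j : ℕ) : theta β j * theta β j = 1 := by
  ext x
  exact thetaFun_invol β j x

lemma theta_mem_fixLt (β j : ℕ) : theta β j ∈ fixLt β := by
  intro x hx
  simp only [theta, Equiv.coe_fn_mk, thetaFun]
  split_ifs <;> omega

lemma theta_mul_theta_mul_theta_mem_fixLt {β t j : ℕ} (h : 2 * t ≤ j) :
    theta β j * theta (β + t) (j - t) * theta β t ∈ fixLt (β + t) := by
  intro x hx
  simp only [Perm.mul_apply, theta, Equiv.coe_fn_mk, thetaFun]
  split_ifs <;> omega

lemma fixLt_antitone : Antitone fixLt :=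
  fun _ _ h _ hg i hi => hg i (lt_of_lt_of_le hi h)

lemma diag3_mem_KK {α M : ℕ} (h : α ≤ M) {c : Perm ℕ} (hc : c ∈ Sinf ⊓ fixLt M) :
    diag3 c ∈ KK α :=
  Subgroup.mem_map_of_mem diag3 ⟨hc.1, fixLt_antitone h hc.2⟩

lemma exists_forall_ge_apply_eq_of_mem_Sinf {g : Perm ℕ} (hg : g ∈ Sinf) :
    ∃ m, ∀ x, m ≤ x → g x = x := by
  obtain ⟨m, hm⟩ := (show {x | g x ≠ x}.Finite from hg).bddAbove
  exact ⟨m + 1, fun x hx => by_contra fun h => absurd (hm h) (by omega)⟩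

lemma exists_forall_commute_of_mem_Sinf {g : Perm ℕ} (hg : g ∈ Sinf) :
    ∃ m, ∀ M, m ≤ M → ∀ c ∈ fixLt M, Commute c g := by
  obtain ⟨m, hm⟩ := exists_forall_ge_apply_eq_of_mem_Sinf hg
  refine ⟨m, fun M hM c hc => Perm.Disjoint.commute fun x => ?_⟩
  rcases lt_or_ge x M with hx | hx
  · exact Or.inl (hc x hx)
  · exact Or.inr (hm x (hM.trans hx))

lemma exists_forall_commute_diag3_of_mem_Ggrp {p : P3} (hp : p ∈ Ggrp) :
    ∃ m, ∀ M, m ≤ M → ∀ c ∈ fixLt M, Commute (diag3 c) p := by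
  obtain ⟨hp₁, hp₂, hp₃⟩ := hp
  obtain ⟨m₁, hm₁⟩ := exists_forall_commute_of_mem_Sinf hp₁
  obtain ⟨m₂, hm₂⟩ := exists_forall_commute_of_mem_Sinf hp₂
  obtain ⟨m₃, hm₃⟩ := exists_forall_commute_of_mem_Sinf hp₃
  refine ⟨m₁ + m₂ + m₃, fun M hM c hc => ?_⟩
  exact Prod.ext (hm₁ M (by omega) c hc)
    (Prod.ext (hm₂ M (by omega) c hc) (hm₃ M (by omega) c hc))

lemma dcosOf_mul_mul {L M : Subgroup P3} {a b : P3} (ha : a ∈ L) (hb : b ∈ M) (x : P3) :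
    dcosOf L M (a * x * b) = dcosOf L M x := by
  ext y
  constructor
  · rintro ⟨a', ha', b', hb', rfl⟩
    exact ⟨a' * a, mul_mem ha' ha, b * b', mul_mem hb hb', by group⟩
  · rintro ⟨a', ha', b', hb', rfl⟩
    exact ⟨a' * a⁻¹, mul_mem ha' (inv_mem ha), b⁻¹ * b', mul_mem (inv_mem hb) hb', by group⟩

lemma Commute.mul_mul_mul_mul_eq {G : Type*} [Group G] {c d u v : G}
    (hc : Commute c u) (hd : Commute d v) (x : G) :
    c * (u * x * v) * d = u * (c * x * d) * v := by
  calc c * (u * x * v) * d = c * u * x * (v * d) := by group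
    _ = u * c * x * (d * v) := by rw [hc.eq, hd.eq]
    _ = u * (c * x * d) * v := by group

lemma dcosOf_mul_ThetaP_mul_eq {α β γ t j : ℕ} {p q : P3} (hα : α ≤ β + t) (hγ : γ ≤ β + t)
    (hp : ∀ c ∈ fixLt (β + t), Commute (diag3 c) p)
    (hq : ∀ c ∈ fixLt (β + t), Commute (diag3 c) q) (hj : 2 * t ≤ j) :
    dcosOf (KK α) (KK γ) (p * ThetaP β j * q) = dcosOf (KK α) (KK γ) (p * ThetaP β t * q) := by
  set c := theta (β + t) (j - t)
  set d := theta β j * c * theta β t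
  have hc : c ∈ Sinf ⊓ fixLt (β + t) := ⟨theta_mem_Sinf _ _, theta_mem_fixLt _ _⟩
  have hd : d ∈ Sinf ⊓ fixLt (β + t) :=
    ⟨mul_mem (mul_mem (theta_mem_Sinf _ _) hc.1) (theta_mem_Sinf _ _),
      theta_mul_theta_mul_theta_mem_fixLt hj⟩
  have hcd : c * theta β j * d = theta β t := by
    calc c * theta β j * d = c * (theta β j * theta β j) * c * theta β t := by
          simp only [d, mul_assoc]
      _ = theta β t := by rw [theta_mul_self, mul_one, theta_mul_self, one_mul]
  calc dcosOf (KK α) (KK γ) (p * ThetaP β j * q)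
      = dcosOf (KK α) (KK γ) (diag3 c * (p * ThetaP β j * q) * diag3 d) :=
        (dcosOf_mul_mul (diag3_mem_KK hα hc) (diag3_mem_KK hγ hd) _).symm
    _ = dcosOf (KK α) (KK γ) (p * ThetaP β t * q) := by
      rw [(hp c hc.2).mul_mul_mul_mul_eq (hq d hd.2), ThetaP, ← map_mul, ← map_mul, hcd, ThetaP]

/-- For all `α, β, γ ∈ ℕ` and all `p, q ∈ G`, the sequence of double
cosets `j ↦ K[α]·(p·Θ_j[β]·q)·K[γ]` is eventually constant. -/
theorem doubleCoset_sequence_eventually_constant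
    (α β γ : ℕ) (p q : P3) (hp : p ∈ Ggrp) (hq : q ∈ Ggrp) :
    ∃ N : ℕ, ∀ j k : ℕ, N ≤ j → N ≤ k →
      dcosOf (KK α) (KK γ) (p * ThetaP β j * q) =
        dcosOf (KK α) (KK γ) (p * ThetaP β k * q) := by
  obtain ⟨m, hm⟩ := exists_forall_commute_diag3_of_mem_Ggrp hp
  obtain ⟨m', hm'⟩ := exists_forall_commute_diag3_of_mem_Ggrp hq
  set t := m + m' + α + γ
  have key : ∀ j, 2 * t ≤ j →
      dcosOf (KK α) (KK γ) (p * ThetaP β j * q) = dcosOf (KK α) (KK γ) (p * ThetaP β t * q) :=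
    fun j => dcosOf_mul_ThetaP_mul_eq (by omega) (by omega) (hm _ (by omega)) (hm' _ (by omega))
  exact ⟨2 * t, fun j k hj hk => (key j hj).trans (key k hk).symm⟩
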